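/- arXiv:0904.0409 — 2 statements merged into one kernel-verified Lean document; each statement's English description precedes it below -/
import Mathlib

section
/- With V(a,k) as above (l odd, ε a primitive 2l-th root of unity, a^{4l} ≠ 1), the coefficient ([a²; k+i]·[i]) = ((a²ε^{k+i} - a⁻²ε^{-k-i})/(ε-ε⁻¹))·((ε^i - ε^{-i})/(ε-ε⁻¹)) is nonzero for all 1 ≤ i ≤ l-1. Consequently the module V(a,k) is simple: any nonzero submodule (i.e. subspace invariant under E, F, and all P_j) equals all of ℂ^l. -/
/-!
The quantum integer `[n]` vanishes only if `ε^{2n} = 1`, i.e. `l ∣ n`, as `ε` has order `2l`;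
`[a²; n]` vanishes only if `a⁴ε^{2n} = 1`, whose `l`-th power is `a^{4l} = 1`.

The basis vectors `v_i` have distinct weights `k - 2i`, so the projections `P_j` extract some `v_i`
from a nonzero vector of an invariant subspace. From `v_i`, `F` reaches every `v_j` with `j > i`,
and `E`, whose coefficients are nonzero, every `v_j` with `j < i`.
-/

section QNumbers

variable {K : Type*} [Field K]

theorem IsPrimitiveRoot.zpow_sub_zpow_neg_ne_zero {ε : K} {l : ℕ}
    (hε : IsPrimitiveRoot ε (2 * l)) (hl : l ≠ 0) {n : ℤ} (hn : ¬(l : ℤ) ∣ n) :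
    ε ^ n - ε ^ (-n) ≠ 0 := by
  intro h
  have hε0 : ε ≠ 0 := hε.ne_zero (by omega)
  have h2n : ε ^ (n - -n) = 1 := by
    rw [zpow_sub₀ hε0, div_eq_one_iff_eq (zpow_ne_zero _ hε0)]
    exact sub_eq_zero.mp h
  rw [hε.zpow_eq_one_iff_dvd, show n - -n = 2 * n by ring] at h2n
  push_cast at h2n
  exact hn ((mul_dvd_mul_iff_left two_ne_zero).mp h2n)

theorem mul_zpow_sub_inv_mul_zpow_neg_ne_zero {ε b : K} {l : ℕ} (hε : ε ^ (2 * l) = 1)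
    (hb0 : b ≠ 0) (hb : b ^ (2 * l) ≠ 1) (n : ℤ) : b * ε ^ n - b⁻¹ * ε ^ (-n) ≠ 0 := by
  intro h
  have hl : 2 * l ≠ 0 := by rintro h0; simp [h0] at hb
  have hε0 : ε ≠ 0 := by rintro rfl; simp [hl] at hε
  set x := b * ε ^ n with hx
  have hx0 : x ≠ 0 := mul_ne_zero hb0 (zpow_ne_zero _ hε0)
  have hxx : x * x = 1 := by
    rw [mul_eq_one_iff_eq_inv₀ hx0, hx, mul_inv, ← zpow_neg]
    exact sub_eq_zero.mp h
  apply hb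
  calc b ^ (2 * l) = b ^ (2 * l) * (ε ^ (2 * l)) ^ n := by rw [hε, one_zpow, mul_one]
    _ = x ^ (2 * l) := by
      rw [hx, mul_pow, ← zpow_natCast (ε ^ n), ← zpow_mul, mul_comm n, zpow_mul, zpow_natCast]
    _ = (x * x) ^ l := by rw [pow_mul, sq]
    _ = 1 := by rw [hxx, one_pow]

theorem qbracket_mul_qint_ne_zero {ε a : K} {l : ℕ} (hε : IsPrimitiveRoot ε (2 * l)) (ha : a ≠ 0)
    (hag : a ^ (4 * l) ≠ 1) (k : ℤ) {i : ℕ} (hi1 : 1 ≤ i) (hil : i ≤ l - 1) :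
    (a ^ 2 * ε ^ (k + i) - (a ^ 2)⁻¹ * ε ^ (-(k + i))) / (ε - ε⁻¹) *
      ((ε ^ (i : ℤ) - ε ^ (-(i : ℤ))) / (ε - ε⁻¹)) ≠ 0 := by
  have hl : l ≠ 0 := by omega
  have hnot_dvd : ∀ m : ℕ, 0 < m → m < l → ¬(l : ℤ) ∣ m := fun m hm hml h =>
    Nat.not_dvd_of_pos_of_lt hm hml (Int.natCast_dvd_natCast.mp h)
  have hden : ε - ε⁻¹ ≠ 0 := by
    simpa using hε.zpow_sub_zpow_neg_ne_zero hl (n := 1)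
      (by exact_mod_cast hnot_dvd 1 one_pos (by omega))
  have hbracket := mul_zpow_sub_inv_mul_zpow_neg_ne_zero hε.pow_eq_one (pow_ne_zero 2 ha)
    (by rwa [← pow_mul, show 2 * (2 * l) = 4 * l by ring]) (k + i)
  exact mul_ne_zero (div_ne_zero hbracket hden)
    (div_ne_zero (hε.zpow_sub_zpow_neg_ne_zero hl (hnot_dvd i hi1 (by omega))) hden)

end QNumbers

namespace Submodule

open Matrix

variable {K ι : Type*} [Field K] [Fintype ι] [DecidableEq ι]

theorem eq_top_of_forall_single_one_mem {W : Submodule K (ι → K)}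
    (h : ∀ i, Pi.single i (1 : K) ∈ W) : W = ⊤ := by
  rw [eq_top_iff, ← (Pi.basisFun K ι).span_eq, span_le]
  rintro _ ⟨i, rfl⟩
  simpa using h i

theorem exists_single_one_mem_of_diagonal_single_mem {W : Submodule K (ι → K)}
    (hW : ∀ i, ∀ v ∈ W, diagonal (Pi.single i 1) *ᵥ v ∈ W) (hne : W ≠ ⊥) :
    ∃ i, Pi.single i (1 : K) ∈ W := by
  obtain ⟨w, hw, hw0⟩ := (Submodule.ne_bot_iff W).mp hne
  obtain ⟨i, hi⟩ := Function.ne_iff.mp hw0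
  have hproj : diagonal (Pi.single i 1) *ᵥ w = w i • Pi.single i 1 := by
    ext r
    by_cases hr : r = i <;> simp [mulVec_diagonal, hr]
  exact ⟨i, (smul_mem_iff W hi).mp (hproj ▸ hW i w hw)⟩

theorem eq_top_of_single_one_mem_iff_succ {l : ℕ} {W : Submodule K (Fin l → K)}
    (hstep : ∀ (c : ℕ) (h : c + 1 < l),
      Pi.single (⟨c, by omega⟩ : Fin l) (1 : K) ∈ W ↔ Pi.single ⟨c + 1, h⟩ 1 ∈ W)
    {i : Fin l} (hi : Pi.single i (1 : K) ∈ W) : W = ⊤ := by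
  have hzero : ∀ (m : ℕ) (hm : m < l),
      Pi.single (⟨m, hm⟩ : Fin l) (1 : K) ∈ W ↔ Pi.single (⟨0, by omega⟩ : Fin l) (1 : K) ∈ W := by
    intro m
    induction m with
    | zero => exact fun _ => Iff.rfl
    | succ m ih => exact fun hm => (hstep m hm).symm.trans (ih (by omega))
  exact eq_top_of_forall_single_one_mem fun j => (hzero j j.isLt).mpr ((hzero i i.isLt).mp hi)

end Submodule

section ShiftModule

open Matrix

variable {K : Type*} [Field K] {l : ℕ}

def lowerShift (l : ℕ) : Matrix (Fin l) (Fin l) K :=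
  Matrix.of fun r c => if (r : ℕ) = (c : ℕ) + 1 then 1 else 0

def upperShift (l : ℕ) (e : ℕ → K) : Matrix (Fin l) (Fin l) K :=
  Matrix.of fun r c => if (c : ℕ) = (r : ℕ) + 1 then e c else 0

def weightProj (l : ℕ) (k j : ℤ) : Matrix (Fin l) (Fin l) K :=
  Matrix.diagonal fun i => if j = k - 2 * (i : ℤ) then 1 else 0

theorem lowerShift_mulVec_single {c : ℕ} (h : c + 1 < l) :
    lowerShift l *ᵥ Pi.single (⟨c, by omega⟩ : Fin l) (1 : K) = Pi.single ⟨c + 1, h⟩ 1 := by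
  ext r
  simp [lowerShift, Pi.single_apply, Fin.ext_iff]

theorem upperShift_mulVec_single (e : ℕ → K) {c : ℕ} (h : c + 1 < l) :
    upperShift l e *ᵥ Pi.single (⟨c + 1, h⟩ : Fin l) 1 = e (c + 1) • Pi.single ⟨c, by omega⟩ 1 := by
  ext r
  simp [upperShift, Pi.single_apply, Fin.ext_iff, eq_comm]

theorem weightProj_sub_two_mul (k : ℤ) (i : Fin l) :
    weightProj l k (k - 2 * (i : ℤ)) = diagonal (Pi.single i (1 : K)) := by
  rw [weightProj]
  congr 1
  funext r
  simp only [Pi.single_apply, Fin.ext_iff]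
  split_ifs <;> first | rfl | omega

theorem eq_top_of_shift_invariant {k : ℤ} {e : ℕ → K}
    (he : ∀ c : ℕ, 1 ≤ c → c ≤ l - 1 → e c ≠ 0) {W : Submodule K (Fin l → K)}
    (hE : ∀ v ∈ W, upperShift l e *ᵥ v ∈ W) (hF : ∀ v ∈ W, lowerShift l *ᵥ v ∈ W)
    (hP : ∀ j : ℤ, ∀ v ∈ W, weightProj l k j *ᵥ v ∈ W) (hne : W ≠ ⊥) : W = ⊤ := by
  have hdiag : ∀ i : Fin l, ∀ v ∈ W, diagonal (Pi.single i 1) *ᵥ v ∈ W := fun i =>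
    weightProj_sub_two_mul (K := K) k i ▸ hP (k - 2 * (i : ℤ))
  obtain ⟨i, hi⟩ := W.exists_single_one_mem_of_diagonal_single_mem hdiag hne
  refine W.eq_top_of_single_one_mem_iff_succ (fun c h => ⟨fun hc => ?_, fun hc => ?_⟩) hi
  · simpa only [lowerShift_mulVec_single h] using hF _ hc
  · have hmem := hE _ hc
    rwa [upperShift_mulVec_single e h, W.smul_mem_iff (he (c + 1) (by omega) (by omega))] at hmem

end ShiftModule

theorem stmt4_general (l : ℕ) (ε a : ℂ)
    (hε : IsPrimitiveRoot ε (2 * l)) (ha : a ≠ 0) (hag : a ^ (4 * l) ≠ 1) (k : ℤ) :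
    let qbin : ℤ → ℂ := fun n => (a ^ 2 * ε ^ n - (a ^ 2)⁻¹ * ε ^ (-n)) / (ε - ε⁻¹)
    let qint : ℤ → ℂ := fun n => (ε ^ n - ε ^ (-n)) / (ε - ε⁻¹)
    let Pm : ℤ → Matrix (Fin l) (Fin l) ℂ := fun j =>
      Matrix.diagonal fun i => if j = k - 2 * (i : ℤ) then 1 else 0
    let Fm : Matrix (Fin l) (Fin l) ℂ :=
      Matrix.of fun r c => if (r : ℕ) = (c : ℕ) + 1 then 1 else 0
    let Em : Matrix (Fin l) (Fin l) ℂ :=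
      Matrix.of fun r c =>
        if (c : ℕ) = (r : ℕ) + 1 then qbin (k + (c : ℕ)) * qint ((c : ℕ) : ℤ) else 0
    (∀ i : ℕ, 1 ≤ i → i ≤ l - 1 → qbin (k + (i : ℤ)) * qint (i : ℤ) ≠ 0) ∧
      ∀ W : Submodule ℂ (Fin l → ℂ),
        (∀ v ∈ W, Em.mulVec v ∈ W) →
        (∀ v ∈ W, Fm.mulVec v ∈ W) →
        (∀ j : ℤ, ∀ v ∈ W, (Pm j).mulVec v ∈ W) →
        W ≠ ⊥ → W = ⊤ := by
  intro qbin qint Pm Fm Em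
  have hcoeff : ∀ i : ℕ, 1 ≤ i → i ≤ l - 1 → qbin (k + (i : ℤ)) * qint (i : ℤ) ≠ 0 :=
    fun _ hi1 hil => qbracket_mul_qint_ne_zero hε ha hag k hi1 hil
  exact ⟨hcoeff, fun W hE hF hP hne =>
    eq_top_of_shift_invariant (e := fun n => qbin (k + n) * qint n) hcoeff hE hF hP hne⟩

/-- For `V(a,k)` with `l` odd, `ε` a primitive `2l`-th root of unity and `a^{4l} ≠ 1`,
the coefficient `[a²; k+i]·[i]` of the `E`-action is nonzero for `1 ≤ i ≤ l-1`, and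
consequently `V(a,k)` is simple: every nonzero subspace invariant under `E`, `F`
and all `P_j` is the whole space. -/
theorem stmt4 (l : ℕ) (hl0 : 0 < l) (hl : Odd l) (ε a : ℂ)
    (hε : IsPrimitiveRoot ε (2 * l)) (ha : a ≠ 0) (hag : a ^ (4 * l) ≠ 1) (k : ℤ) :
    let qbin : ℤ → ℂ := fun n => (a ^ 2 * ε ^ n - (a ^ 2)⁻¹ * ε ^ (-n)) / (ε - ε⁻¹)
    let qint : ℤ → ℂ := fun n => (ε ^ n - ε ^ (-n)) / (ε - ε⁻¹)
    let Pm : ℤ → Matrix (Fin l) (Fin l) ℂ := fun j =>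
      Matrix.diagonal fun i => if j = k - 2 * (i : ℤ) then 1 else 0
    let Fm : Matrix (Fin l) (Fin l) ℂ :=
      Matrix.of fun r c => if (r : ℕ) = (c : ℕ) + 1 then 1 else 0
    let Em : Matrix (Fin l) (Fin l) ℂ :=
      Matrix.of fun r c =>
        if (c : ℕ) = (r : ℕ) + 1 then qbin (k + (c : ℕ)) * qint ((c : ℕ) : ℤ) else 0
    (∀ i : ℕ, 1 ≤ i → i ≤ l - 1 → qbin (k + (i : ℤ)) * qint (i : ℤ) ≠ 0) ∧
      ∀ W : Submodule ℂ (Fin l → ℂ),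
        (∀ v ∈ W, Em.mulVec v ∈ W) →
        (∀ v ∈ W, Fm.mulVec v ∈ W) →
        (∀ j : ℤ, ∀ v ∈ W, (Pm j).mulVec v ∈ W) →
        W ≠ ⊥ → W = ⊤ :=
  stmt4_general l ε a hε ha hag k
end

section
/- Let A be an associative unital ℂ-algebra containing elements E and a family of orthogonal idempotents P_j (j ∈ ℤ) with P_i E = E P_{i-2}, and an invertible central element x. Define R₀ = Σ_{i,j} t^{ij} x^i P_j ⊗ x^j P_i (interpreted as an operator on a tensor product of two modules on which only finitely many P_j act nonzero, and on which x acts invertibly with t a square root of ε). Then R₀(E ⊗ 1) = (E ⊗ K)R₀ and R₀(1 ⊗ E) = (K ⊗ E)R₀, where K = Σ_j x²ε^j P_j. -/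
/-!
`R₀` is diagonal in the weight decomposition of `V ⊗ W`, with eigenvalue
`t^{ab} x_V^b x_W^a` on `V_a ⊗ W_b`. Since `E ⊗ 1` only moves `V_a ⊗ W_b` into `V_{a+2} ⊗ W_b`,
the intertwining relation reduces to comparing the eigenvalues at `(a + 2, b)` and `(a, b)`;
their ratio `x_W² t^{2b} = x_W² ε^b` is exactly the eigenvalue of `1 ⊗ K` on `W_b`.
-/

open Kronecker Matrix

section Intertwining

variable {ι κ α : Type*} [DecidableEq ι] [DecidableEq κ]

theorem Matrix.diagonal_mul_eq_mul_diagonal_of_ne_zero [NonUnitalNonAssocCommSemiring α]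
    {n : Type*} [Fintype n] [DecidableEq n] {A : Matrix n n α} {d d' : n → α}
    (h : ∀ i j, A i j ≠ 0 → d i = d' j) : diagonal d * A = A * diagonal d' := by
  ext i j
  rw [diagonal_mul, mul_diagonal]
  by_cases hA : A i j = 0
  · simp [hA]
  · rw [h i j hA, mul_comm]

theorem Matrix.one_kronecker_diagonal [MulZeroOneClass α] (k : κ → α) :
    (1 : Matrix ι ι α) ⊗ₖ diagonal k = diagonal fun pq => k pq.2 := by
  rw [← diagonal_one, diagonal_kronecker_diagonal]
  simp only [one_mul]

theorem Matrix.diagonal_kronecker_one [MulZeroOneClass α] (k : ι → α) :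
    diagonal k ⊗ₖ (1 : Matrix κ κ α) = diagonal fun pq => k pq.1 := by
  rw [← diagonal_one, diagonal_kronecker_diagonal]
  simp only [mul_one]

variable [Fintype ι] [Fintype κ] [CommSemiring α]

theorem Matrix.diagonal_mul_kronecker_one {A : Matrix ι ι α} {d : ι × κ → α} {k : κ → α}
    (h : ∀ p p' q, A p p' ≠ 0 → d (p, q) = k q * d (p', q)) :
    diagonal d * (A ⊗ₖ 1) = (A ⊗ₖ diagonal k) * diagonal d := calc
  diagonal d * (A ⊗ₖ 1) = (A ⊗ₖ 1) * diagonal fun pq => k pq.2 * d pq := by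
    refine diagonal_mul_eq_mul_diagonal_of_ne_zero fun ⟨p, q⟩ ⟨p', q'⟩ hA => ?_
    obtain rfl : q = q' := by_contra fun hne => right_ne_zero_of_mul hA (one_apply_ne hne)
    exact h p p' q (left_ne_zero_of_mul hA)
  _ = (A ⊗ₖ diagonal k) * diagonal d := by
    rw [← diagonal_mul_diagonal, ← one_kronecker_diagonal, ← mul_assoc, ← mul_kronecker_mul,
      mul_one, one_mul]

theorem Matrix.diagonal_mul_one_kronecker {B : Matrix κ κ α} {d : ι × κ → α} {k : ι → α}
    (h : ∀ p q q', B q q' ≠ 0 → d (p, q) = k p * d (p, q')) :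
    diagonal d * (1 ⊗ₖ B) = (diagonal k ⊗ₖ B) * diagonal d := calc
  diagonal d * (1 ⊗ₖ B) = (1 ⊗ₖ B) * diagonal fun pq => k pq.1 * d pq := by
    refine diagonal_mul_eq_mul_diagonal_of_ne_zero fun ⟨p, q⟩ ⟨p', q'⟩ hB => ?_
    obtain rfl : p = p' := by_contra fun hne => left_ne_zero_of_mul hB (one_apply_ne hne)
    exact h p q q' (right_ne_zero_of_mul hB)
  _ = (diagonal k ⊗ₖ B) * diagonal d := by
    rw [← diagonal_mul_diagonal, ← diagonal_kronecker_one, ← mul_assoc, ← mul_kronecker_mul,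
      mul_one, one_mul]

end Intertwining

section Eigenvalue

variable {K : Type*} [Field K] (t x y : K)

def rZeroEigenvalue (a b : ℤ) : K := t ^ (a * b) * x ^ b * y ^ a

theorem rZeroEigenvalue_swap (a b : ℤ) : rZeroEigenvalue t x y a b = rZeroEigenvalue t y x b a := by
  simp only [rZeroEigenvalue, mul_comm a b, mul_right_comm _ (x ^ b)]

variable {t x y}

theorem rZeroEigenvalue_add_two_left (ht : t ≠ 0) (hy : y ≠ 0) (a b : ℤ) :
    rZeroEigenvalue t x y (a + 2) b = y ^ 2 * (t ^ 2) ^ b * rZeroEigenvalue t x y a b := by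
  simp only [rZeroEigenvalue, add_mul, zpow_add₀ ht, zpow_add₀ hy, _root_.zpow_mul t 2 b,
    zpow_ofNat]
  ring

theorem rZeroEigenvalue_add_two_right (ht : t ≠ 0) (hx : x ≠ 0) (a b : ℤ) :
    rZeroEigenvalue t x y a (b + 2) = x ^ 2 * (t ^ 2) ^ a * rZeroEigenvalue t x y a b := by
  rw [rZeroEigenvalue_swap, rZeroEigenvalue_add_two_left ht hx, rZeroEigenvalue_swap]

end Eigenvalue

/-- On a tensor product of weight modules (each a direct sum of weight spaces,
with the central element `x` acting by the scalars `xV`, `xW` respectively), the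
operator `R₀ = Σ t^{ij} x^i P_j ⊗ x^j P_i` (diagonal in the weight basis) satisfies
`R₀(E ⊗ 1) = (E ⊗ K) R₀` and `R₀(1 ⊗ E) = (K ⊗ E) R₀`, where `K = Σ_j x² ε^j P_j`
acts on a weight-`j` vector by `x² ε^j`, and `E` raises weights by `2`. -/
theorem stmt5 (ε t xV xW : ℂ) (ht : t ^ 2 = ε) (ht0 : t ≠ 0)
    (hxV : xV ≠ 0) (hxW : xW ≠ 0)
    {ι κ : Type*} [Fintype ι] [Fintype κ] [DecidableEq ι] [DecidableEq κ]
    (wV : ι → ℤ) (wW : κ → ℤ)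
    (EV : Matrix ι ι ℂ) (hEV : ∀ p q, EV p q ≠ 0 → wV p = wV q + 2)
    (EW : Matrix κ κ ℂ) (hEW : ∀ p q, EW p q ≠ 0 → wW p = wW q + 2) :
    let R0 : Matrix (ι × κ) (ι × κ) ℂ :=
      Matrix.diagonal fun pq => t ^ (wV pq.1 * wW pq.2) * xV ^ (wW pq.2) * xW ^ (wV pq.1)
    let KV : Matrix ι ι ℂ := Matrix.diagonal fun p => xV ^ 2 * ε ^ (wV p)
    let KW : Matrix κ κ ℂ := Matrix.diagonal fun q => xW ^ 2 * ε ^ (wW q)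
    R0 * (EV ⊗ₖ (1 : Matrix κ κ ℂ)) = (EV ⊗ₖ KW) * R0 ∧
      R0 * ((1 : Matrix ι ι ℂ) ⊗ₖ EW) = (KV ⊗ₖ EW) * R0 := by
  subst ht
  refine ⟨diagonal_mul_kronecker_one fun p p' q hE => ?_,
    diagonal_mul_one_kronecker fun p q q' hE => ?_⟩
  · exact (congrArg (rZeroEigenvalue t xV xW · (wW q)) (hEV p p' hE)).trans
      (rZeroEigenvalue_add_two_left ht0 hxW _ _)
  · exact (congrArg (rZeroEigenvalue t xV xW (wV p)) (hEW q q' hE)).trans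
      (rZeroEigenvalue_add_two_right ht0 hxV _ _)
end
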